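/- arXiv:1912.05256 — 3 statements merged into one kernel-verified Lean document; each statement's English description precedes it below -/
import Mathlib

section
/- There exist a field extension K of F with [K:F] = 3 and a surjective K-algebra homomorphism from 𝒮 ⊗_F K onto the matrix algebra M₃(K); equivalently, 𝒮 ⊗_F K admits an irreducible representation of dimension 3 over K. -/
open scoped TensorProduct

set_option synthInstance.maxHeartbeats 1000000
set_option maxHeartbeats 1000000

/-- A two-element family of types, used to form binary free products. -/
def fam (A B : Type) : Bool → Type
  | true => A
  | false => B

instance famSemiring (A B : Type) [Semiring A] [Semiring B] : ∀ b, Semiring (fam A B b)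
  | true => ‹Semiring A›
  | false => ‹Semiring B›

instance famAlgebra (k A B : Type) [CommSemiring k] [Semiring A] [Semiring B]
    [Algebra k A] [Algebra k B] : ∀ b, Algebra k (fam A B b)
  | true => ‹Algebra k A›
  | false => ‹Algebra k B›

/-- The free product (coproduct in the category of unital associative `k`-algebras)
`A * B` of two `k`-algebras. -/
abbrev FP (k A B : Type) [CommSemiring k] [Semiring A] [Semiring B]
    [Algebra k A] [Algebra k B] : Type :=
  LinearAlgebra.FreeProduct k (fam A B)

/-- The canonical map `A →ₐ[k] A * B`. -/
noncomputable def inl (k A B : Type) [CommSemiring k] [Semiring A] [Semiring B]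
    [Algebra k A] [Algebra k B] : A →ₐ[k] FP k A B :=
  LinearAlgebra.FreeProduct.ι k (fam A B) true

/-- The canonical map `B →ₐ[k] A * B`. -/
noncomputable def inr (k A B : Type) [CommSemiring k] [Semiring A] [Semiring B]
    [Algebra k A] [Algebra k B] : B →ₐ[k] FP k A B :=
  LinearAlgebra.FreeProduct.ι k (fam A B) false

/-- The field `F = k(y₁,y₂,y₃)` of rational functions in three variables over `k`. -/
abbrev Ffield (k : Type) [Field k] : Type := FractionRing (MvPolynomial (Fin 3) k)

/-- The variable `yᵢ`, viewed as an element of `F = k(y₁,y₂,y₃)`. -/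
noncomputable def yvar (k : Type) [Field k] (i : Fin 3) : Ffield k :=
  algebraMap (MvPolynomial (Fin 3) k) (Ffield k) (MvPolynomial.X i)

/-- The image in `𝒜 * ℬ` of the `i`-th standard primitive idempotent of `𝒜 = F^⊕3`. -/
noncomputable def pgen (k : Type) [Field k] (i : Fin 3) :
    FP (Ffield k) (Fin 3 → Ffield k) (Fin 3 → Ffield k) :=
  inl (Ffield k) (Fin 3 → Ffield k) (Fin 3 → Ffield k) (Pi.single i 1)

/-- The image in `𝒜 * ℬ` of the `i`-th standard primitive idempotent of `ℬ = F^⊕3`. -/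
noncomputable def qgen (k : Type) [Field k] (i : Fin 3) :
    FP (Ffield k) (Fin 3 → Ffield k) (Fin 3 → Ffield k) :=
  inr (Ffield k) (Fin 3 → Ffield k) (Fin 3 → Ffield k) (Pi.single i 1)

/-- The element `X = [p₁,q₁] + y₁[p₁,q₂] + y₂[p₂,q₁] + y₃[p₂,q₂]` of `𝒜 * ℬ`. -/
noncomputable def Xrel (k : Type) [Field k] :
    FP (Ffield k) (Fin 3 → Ffield k) (Fin 3 → Ffield k) :=
  (pgen k 0 * qgen k 0 - qgen k 0 * pgen k 0)
    + yvar k 0 • (pgen k 0 * qgen k 1 - qgen k 1 * pgen k 0)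
    + yvar k 1 • (pgen k 1 * qgen k 0 - qgen k 0 * pgen k 1)
    + yvar k 2 • (pgen k 1 * qgen k 1 - qgen k 1 * pgen k 1)

/-- The `F`-algebra `𝒮`: the quotient of `𝒜 * ℬ = F^⊕3 * F^⊕3` by the two-sided ideal
generated by `X`. -/
noncomputable abbrev Salg (k : Type) [Field k] : Type :=
  @RingQuot (FP (Ffield k) (Fin 3 → Ffield k) (Fin 3 → Ffield k)) Ring.toSemiring
    (fun u v => u = Xrel k ∧ v = 0)


/-!
Already over `F` the algebra `𝒮` surjects onto `M₃(F)`: send `pᵢ` to the diagonal idempotent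
`Eᵢᵢ` and `qⱼ` to `V Eⱼⱼ V⁻¹` for an explicit matrix `V` over `k[y₁,y₂,y₃]` with nonzero
determinant. Since the `pᵢ` act diagonally, `X ↦ 0` amounts to polynomial identities in the
entries of `V` and of its adjugate. The image contains the `Eₐₐ` and `Q = V E₁₁ V⁻¹`, none of
whose entries vanishes (this is checked by evaluating at `y = (2,3,5)`), so it contains every
`Eₐₐ Q E_bb`, i.e. every matrix unit. Such a surjection survives base change to any extension
`K`, and `F` has a cubic extension because the prime `y₁` of the factorial ring `k[y₁,y₂,y₃]`
is not a cube in `F`.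
-/

section FreeProduct

variable {R A B : Type} {C : Type*} [CommSemiring R] [Semiring A] [Semiring B] [Semiring C]
  [Algebra R A] [Algebra R B] [Algebra R C]

noncomputable def FP.lift (f : A →ₐ[R] C) (g : B →ₐ[R] C) : FP R A B →ₐ[R] C :=
  LinearAlgebra.FreeProduct.lift R (fam A B) fun {b} =>
    match b with
    | true => f
    | false => g

theorem FP.lift_inl (f : A →ₐ[R] C) (g : B →ₐ[R] C) (a : A) :
    FP.lift f g (inl R A B a) = f a :=
  AlgHom.congr_fun (LinearAlgebra.FreeProduct.lift_comp_ι R (fam A B) _ (i := true)) a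

theorem FP.lift_inr (f : A →ₐ[R] C) (g : B →ₐ[R] C) (b : B) :
    FP.lift f g (inr R A B b) = g b :=
  AlgHom.congr_fun (LinearAlgebra.FreeProduct.lift_comp_ι R (fam A B) _ (i := false)) b

end FreeProduct

section Relation

variable {R C D : Type*} [CommRing R] [Ring C] [Algebra R C] [Ring D] [Algebra R D]

def xrel (y : Fin 3 → R) (p q : Fin 3 → C) : C :=
  (p 0 * q 0 - q 0 * p 0) + y 0 • (p 0 * q 1 - q 1 * p 0)
    + y 1 • (p 1 * q 0 - q 0 * p 1) + y 2 • (p 1 * q 1 - q 1 * p 1)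

theorem Xrel_eq_xrel (k : Type) [Field k] : Xrel k = xrel (yvar k) (pgen k) (qgen k) := rfl

theorem AlgHom.map_xrel (φ : C →ₐ[R] D) (y : Fin 3 → R) (p q : Fin 3 → C) :
    φ (xrel y p q) = xrel y (φ ∘ p) (φ ∘ q) := by
  simp [xrel]

theorem xrel_smul_right (y : Fin 3 → R) (p q : Fin 3 → C) (c : R) :
    xrel y p (c • q) = c • xrel y p q := by
  simp only [xrel, Pi.smul_apply, mul_smul_comm, smul_mul_assoc, ← smul_sub, smul_add,
    smul_comm c]

end Relation

namespace Salg

variable {k : Type} [Field k] {C : Type*} [Ring C] [Algebra (Ffield k) C]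

noncomputable def lift (f g : (Fin 3 → Ffield k) →ₐ[Ffield k] C)
    (h : xrel (yvar k) (fun i => f (Pi.single i 1)) (fun j => g (Pi.single j 1)) = 0) :
    Salg k →ₐ[Ffield k] C :=
  RingQuot.liftAlgHom (Ffield k) ⟨FP.lift f g, by
    rintro _ _ ⟨rfl, rfl⟩
    have hp : FP.lift f g ∘ pgen k = fun i => f (Pi.single i 1) :=
      funext fun i => FP.lift_inl f g _
    have hq : FP.lift f g ∘ qgen k = fun j => g (Pi.single j 1) :=
      funext fun j => FP.lift_inr f g _
    rw [Xrel_eq_xrel, map_zero]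
    exact (AlgHom.map_xrel (FP.lift f g) (yvar k) (pgen k) (qgen k)).trans (hp ▸ hq ▸ h)⟩

variable (f g : (Fin 3 → Ffield k) →ₐ[Ffield k] C)
  (h : xrel (yvar k) (fun i => f (Pi.single i 1)) (fun j => g (Pi.single j 1)) = 0)

theorem lift_mkAlgHom (x : FP (Ffield k) (Fin 3 → Ffield k) (Fin 3 → Ffield k)) :
    lift f g h (RingQuot.mkAlgHom (Ffield k) _ x) = FP.lift f g x :=
  RingQuot.liftAlgHom_mkAlgHom_apply _ _ _ _

theorem apply_mem_range_lift_left (a : Fin 3 → Ffield k) : f a ∈ (lift f g h).range :=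
  ⟨_, (lift_mkAlgHom f g h (inl _ _ _ a)).trans (FP.lift_inl f g a)⟩

theorem apply_mem_range_lift_right (b : Fin 3 → Ffield k) : g b ∈ (lift f g h).range :=
  ⟨_, (lift_mkAlgHom f g h (inr _ _ _ b)).trans (FP.lift_inr f g b)⟩

end Salg

namespace Matrix

variable {n R : Type*} [Fintype n] [DecidableEq n]

theorem single_mul_sub_mul_single_apply [CommRing R] (M : Matrix n n R) (i a b : n) :
    (single i i 1 * M - M * single i i 1 : Matrix n n R) a b =
      ((if a = i then 1 else 0) - (if b = i then 1 else 0)) * M a b := by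
  by_cases ha : a = i <;> by_cases hb : b = i <;> simp [ha, hb]

theorem mul_single_mul_apply [CommRing R] (M N : Matrix n n R) (j a b : n) :
    (M * single j j 1 * N : Matrix n n R) a b = M a j * N j b := by
  rw [mul_apply, Finset.sum_eq_single j]
  · simp
  · intro x _ hx
    simp [mul_single_apply_of_ne, hx]
  · simp

theorem subalgebra_eq_top_of_single_mem_of_ne_zero [Field R] (S : Subalgebra R (Matrix n n R))
    (hS : ∀ i, single i i 1 ∈ S) {Q : Matrix n n R} (hQ : Q ∈ S) (hQ0 : ∀ i j, Q i j ≠ 0) :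
    S = ⊤ := by
  have hsingle (i j : n) : single i j 1 ∈ S := by
    have h := S.smul_mem (S.mul_mem (S.mul_mem (hS i) hQ) (hS j)) (Q i j)⁻¹
    rwa [single_mul_mul_single, one_mul, mul_one, smul_single, smul_eq_mul,
      inv_mul_cancel₀ (hQ0 i j)] at h
  refine eq_top_iff.mpr fun M _ => ?_
  rw [matrix_eq_sum_single M]
  refine S.sum_mem fun i _ => S.sum_mem fun j _ => ?_
  simpa [smul_single] using S.smul_mem (hsingle i j) (M i j)

end Matrix

section FrameMatrix

open Matrix

variable {R : Type*} [CommRing R]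

/-- Column `j` spans the image of `q_{j+1}` in `frameRep` below. -/
def frameMatrix (y : Fin 3 → R) : Matrix (Fin 3) (Fin 3) R :=
  !![1, y 2 * (1 - y 1), y 2 * (y 0 + y 1 - 1 - y 2) * (1 - y 0);
     1, y 0 * y 1 * (1 - y 1), y 0 * (y 0 + y 1 - 1 - y 2) * (y 1 - y 2);
     1, y 1 * (y 0 - y 2), (y 1 - y 2) * (y 2 - y 0) * (1 - y 0)]

theorem frameMatrix_apply_zero (y : Fin 3 → R) (a : Fin 3) : frameMatrix y a 0 = 1 := by
  fin_cases a <;> rfl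

theorem frameMatrix_map {S : Type*} [CommRing S] (f : R →+* S) (y : Fin 3 → R) :
    (frameMatrix y).map f = frameMatrix (f ∘ y) := by
  ext i j
  fin_cases i <;> fin_cases j <;> simp [frameMatrix]

theorem xrel_frameMatrix_adjugate (y : Fin 3 → R) :
    xrel y (fun i => single i i 1)
      (fun j => frameMatrix y * single j j 1 * adjugate (frameMatrix y)) = 0 := by
  ext a b
  fin_cases a <;> fin_cases b <;>
    (simp only [xrel, Matrix.add_apply, Matrix.smul_apply, smul_eq_mul, Matrix.zero_apply,
      single_mul_sub_mul_single_apply, mul_single_mul_apply]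
     simp [adjugate_fin_three, frameMatrix]
     try ring)

theorem xrel_frameMatrix_inv (y : Fin 3 → R) :
    xrel y (fun i => single i i 1)
      (fun j => frameMatrix y * single j j 1 * (frameMatrix y)⁻¹) = 0 := by
  have hinv : (fun j => frameMatrix y * single j j 1 * (frameMatrix y)⁻¹) =
      Ring.inverse (frameMatrix y).det •
        fun j => frameMatrix y * single j j 1 * adjugate (frameMatrix y) := by
    ext1 j
    rw [inv_def, Pi.smul_apply, mul_smul_comm]
  rw [hinv, xrel_smul_right, xrel_frameMatrix_adjugate, smul_zero]

end FrameMatrix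

section Representation

open Matrix

variable (k : Type) [Field k]

theorem algebraMap_fractionRing_ne_zero_of_eval_ne_zero {σ : Type*} {p : MvPolynomial σ k}
    (x : σ → k) (h : MvPolynomial.eval x p ≠ 0) :
    algebraMap (MvPolynomial σ k) (FractionRing (MvPolynomial σ k)) p ≠ 0 :=
  (map_ne_zero_iff _ (IsFractionRing.injective _ _)).mpr fun hp => h (by rw [hp, map_zero])

theorem frameMatrix_eval_X (x : Fin 3 → k) :
    (MvPolynomial.eval x).mapMatrix (frameMatrix MvPolynomial.X) = frameMatrix x := by
  rw [RingHom.mapMatrix_apply, frameMatrix_map]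
  exact congrArg frameMatrix (funext fun _ => MvPolynomial.eval_X _)

theorem frameMatrix_yvar :
    frameMatrix (yvar k) =
      (algebraMap (MvPolynomial (Fin 3) k) (Ffield k)).mapMatrix (frameMatrix MvPolynomial.X) := by
  rw [RingHom.mapMatrix_apply, frameMatrix_map]
  rfl

variable [CharZero k]

theorem det_frameMatrix_yvar_ne_zero : (frameMatrix (yvar k)).det ≠ 0 := by
  rw [frameMatrix_yvar, ← RingHom.map_det]
  refine algebraMap_fractionRing_ne_zero_of_eval_ne_zero k ![2, 3, 5] ?_
  rw [RingHom.map_det, frameMatrix_eval_X]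
  simp [det_fin_three, frameMatrix]
  norm_num

theorem adjugate_frameMatrix_yvar_ne_zero (b : Fin 3) :
    adjugate (frameMatrix (yvar k)) 0 b ≠ 0 := by
  rw [frameMatrix_yvar, ← RingHom.map_adjugate, RingHom.mapMatrix_apply, map_apply]
  refine algebraMap_fractionRing_ne_zero_of_eval_ne_zero k ![2, 3, 5] ?_
  have h := congrFun (congrFun
    (RingHom.map_adjugate (MvPolynomial.eval ![(2 : k), 3, 5]) (frameMatrix MvPolynomial.X)) 0) b
  rw [frameMatrix_eval_X, RingHom.mapMatrix_apply, map_apply] at h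
  rw [h]
  fin_cases b <;> simp [adjugate_fin_three, frameMatrix] <;> norm_num

noncomputable def frameConj :
    Matrix (Fin 3) (Fin 3) (Ffield k) ≃ₐ[Ffield k] Matrix (Fin 3) (Fin 3) (Ffield k) :=
  MulSemiringAction.toAlgEquiv (Ffield k) _ (ConjAct.toConjAct
    (nonsingInvUnit (frameMatrix (yvar k)) (det_frameMatrix_yvar_ne_zero k).isUnit))

theorem frameConj_apply (M : Matrix (Fin 3) (Fin 3) (Ffield k)) :
    frameConj k M = frameMatrix (yvar k) * M * (frameMatrix (yvar k))⁻¹ :=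
  rfl

noncomputable def frameRep : Salg k →ₐ[Ffield k] Matrix (Fin 3) (Fin 3) (Ffield k) :=
  Salg.lift (diagonalAlgHom (Ffield k)) ((frameConj k).toAlgHom.comp (diagonalAlgHom (Ffield k)))
    (by simpa [diagonal_single, frameConj_apply] using xrel_frameMatrix_inv (yvar k))

theorem frameRep_surjective : Function.Surjective (frameRep k) := by
  rw [← AlgHom.range_eq_top]
  refine subalgebra_eq_top_of_single_mem_of_ne_zero _ (fun i => ?_)
    (Q := frameConj k (single 0 0 1)) ?_ fun a b => ?_
  · rw [← diagonal_single]
    exact Salg.apply_mem_range_lift_left _ _ _ (Pi.single i 1)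
  · rw [← diagonal_single]
    exact Salg.apply_mem_range_lift_right _ _ _ (Pi.single 0 1)
  · rw [frameConj_apply, mul_single_mul_apply, inv_def, Matrix.smul_apply, smul_eq_mul,
      Ring.inverse_eq_inv', frameMatrix_apply_zero, one_mul]
    exact mul_ne_zero (inv_ne_zero (det_frameMatrix_yvar_ne_zero k))
      (adjugate_frameMatrix_yvar_ne_zero k b)

end Representation

universe u

theorem IsIntegrallyClosed.pow_ne_algebraMap_of_prime {R F : Type*} [CommRing R] [IsDomain R]
    [IsIntegrallyClosed R] [Field F] [Algebra R F] [IsFractionRing R F] {p : R} (hp : Prime p)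
    {n : ℕ} (hn : 1 < n) (b : F) : b ^ n ≠ algebraMap R F p := by
  intro hb
  have hint : IsIntegral R b := IsIntegral.of_pow (by omega) (hb ▸ isIntegral_algebraMap)
  obtain ⟨c, rfl⟩ := IsIntegrallyClosed.isIntegral_iff.mp hint
  rw [← map_pow] at hb
  have hc : c ^ n = p := IsFractionRing.injective R F hb
  exact not_irreducible_pow hn.ne' (hc ▸ hp.irreducible)

theorem exists_finrank_eq_of_forall_pow_ne {F : Type u} [Field F] {p : ℕ} (hp : p.Prime) {a : F}
    (ha : ∀ b : F, b ^ p ≠ a) :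
    ∃ (K : Type u) (_ : Field K) (_ : Algebra F K), Module.finrank F K = p := by
  have hirr := X_pow_sub_C_irreducible_of_prime hp ha
  have := Fact.mk hirr
  refine ⟨AdjoinRoot (Polynomial.X ^ p - Polynomial.C a : Polynomial F), inferInstance,
    inferInstance, ?_⟩
  rw [(AdjoinRoot.powerBasis hirr.ne_zero).finrank, AdjoinRoot.powerBasis_dim,
    Polynomial.natDegree_X_pow_sub_C]

theorem exists_finrank_Ffield_eq_three (k : Type) [Field k] :
    ∃ (K : Type) (_ : Field K) (_ : Algebra (Ffield k) K), Module.finrank (Ffield k) K = 3 :=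
  exists_finrank_eq_of_forall_pow_ne Nat.prime_three <|
    IsIntegrallyClosed.pow_ne_algebraMap_of_prime
      (MvPolynomial.X_prime (R := k) (i := (0 : Fin 3))) (by norm_num)

theorem AlgHom.exists_surjective_baseChange_matrix {R A K n : Type*} [CommSemiring R]
    [Semiring A] [Algebra R A] [CommSemiring K] [Algebra R K] [Fintype n] [DecidableEq n]
    (f : A →ₐ[R] Matrix n n R) (hf : Function.Surjective f) :
    ∃ g : K ⊗[R] A →ₐ[K] Matrix n n K, Function.Surjective g := by
  let g := Algebra.TensorProduct.lift (Algebra.ofId K (Matrix n n K))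
    ((Algebra.ofId R K).mapMatrix.comp f) fun c _ =>
      show Commute (Algebra.ofId K _ c) _ from Algebra.commute_algebraMap_left c _
  have hg (c : K) (a : A) : g (c ⊗ₜ a) = c • (f a).map (algebraMap R K) := by
    rw [Algebra.TensorProduct.lift_tmul, Algebra.ofId_apply, Algebra.smul_def]
    rfl
  refine ⟨g, fun M => ?_⟩
  choose z hz using hf
  refine ⟨∑ i, ∑ j, M i j ⊗ₜ z (Matrix.single i j 1), ?_⟩
  conv_rhs => rw [Matrix.matrix_eq_sum_single M]
  simp [hg, hz, Matrix.smul_single]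

theorem statement7_general (k : Type) [Field k] [CharZero k] :
    ∃ (K : Type) (_ : Field K) (_ : Algebra (Ffield k) K),
      Module.finrank (Ffield k) K = 3 ∧
      ∃ f : (K ⊗[Ffield k] Salg k) →ₐ[K] Matrix (Fin 3) (Fin 3) K,
        Function.Surjective f := by
  obtain ⟨K, _, _, hK⟩ := exists_finrank_Ffield_eq_three k
  exact ⟨K, _, _, hK,
    AlgHom.exists_surjective_baseChange_matrix (frameRep k) (frameRep_surjective k)⟩

theorem statement7 (k : Type) [Field k] [IsAlgClosed k] [CharZero k] :
    ∃ (K : Type) (_ : Field K) (_ : Algebra (Ffield k) K),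
      Module.finrank (Ffield k) K = 3 ∧
      ∃ f : (K ⊗[Ffield k] Salg k) →ₐ[K] Matrix (Fin 3) (Fin 3) K,
        Function.Surjective f :=
  statement7_general k
end

section
/- Let A and B be finite-dimensional unital associative k-algebras, let Ā be a k-linear complement of k·1 in A and B̄ a k-linear complement of k·1 in B, identified with their images in A*B (so that Ā ⊕ B̄ is a subspace of A*B). Let V ⊆ Ā ⊕ B̄ be a k-subspace such that the projections π_A : Ā ⊕ B̄ → Ā and π_B : Ā ⊕ B̄ → B̄ restrict to surjections of V onto Ā and onto B̄, and let R(V) denote the subalgebra of A*B generated by V. Put m = min(dim_k A, dim_k B). Then there is a surjective homomorphism of left R(V)-modules R(V)^⊕m → A*B; equivalently, A*B is generated by m elements as a left R(V)-module. -/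
/-
Let `R` be the subalgebra generated by `V` and `M` the left `R`-submodule of `A * B` spanned by
the image of `A`. Since `1 ∈ M` and `A * B` is generated by the images of `A` and `B`, it suffices
that `M` is stable under right multiplication by them. For `A` this is clear. For `B`, pick for
`a ∈ A` some `b'` with `a + b' ∈ R` (possible as `A = k·1 + Ā`); then `a b = (a + b') b - b' b`,
and every `r b` with `r ∈ R` lies in `M` because `r b = r (b + a') - r a'` for some `a'` with
`b + a' ∈ R`. So `M` is spanned over `R` by the image of a basis of `A`; by symmetry the same
holds with `B`.
-/

open scoped TensorProduct

open LinearAlgebra in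
theorem FP.adjoin_range_inl_union_range_inr (k A B : Type) [CommSemiring k] [Semiring A] [Semiring B]
    [Algebra k A] [Algebra k B] :
    Algebra.adjoin k (Set.range (inl k A B) ∪ Set.range (inr k A B)) = ⊤ := by
  set T := Algebra.adjoin k (Set.range (inl k A B) ∪ Set.range (inr k A B))
  let φ : FP k A B →ₐ[k] T := FreeProduct.lift k (fam A B) fun {i} =>
    match i with
    | true => (inl k A B).codRestrict T fun a => Algebra.subset_adjoin (Or.inl ⟨a, rfl⟩)
    | false => (inr k A B).codRestrict T fun b => Algebra.subset_adjoin (Or.inr ⟨b, rfl⟩)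
  have hφ : T.val.comp φ = AlgHom.id k _ := by
    apply (FreeProduct.lift k (fam A B)).symm.injective
    funext i
    rw [FreeProduct.lift_symm_apply, FreeProduct.lift_symm_apply, AlgHom.comp_assoc,
      FreeProduct.lift_comp_ι]
    cases i <;> rfl
  refine eq_top_iff.2 fun y _ => ?_
  rw [← AlgHom.id_apply (R := k) y, ← hφ]
  exact (φ y).2

section LeftGeneration

variable {k F A B : Type*} [CommRing k] [Ring F] [Algebra k F] [Semiring A] [Algebra k A]
  [Semiring B] [Algebra k B] {R : Subalgebra k F} {f : A →ₐ[k] F} {g : B →ₐ[k] F}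

open Submodule

theorem mul_apply_mem_span_range (hg : ∀ b, ∃ a, g b + f a ∈ R) {r : F} (hr : r ∈ R) (b : B) :
    r * g b ∈ span R (Set.range f) := by
  have mul_mem : ∀ s ∈ R, ∀ a, s * f a ∈ span R (Set.range f) := fun s hs a =>
    smul_mem _ (⟨s, hs⟩ : R) (subset_span (Set.mem_range_self a))
  obtain ⟨a, hab⟩ := hg b
  rw [show r * g b = (r * (g b + f a)) * f 1 - r * f a by rw [map_one]; noncomm_ring]
  exact sub_mem (mul_mem _ (R.mul_mem hr hab) 1) (mul_mem r hr a)

theorem mul_mem_span_range (hf : ∀ a, ∃ b, f a + g b ∈ R) (hg : ∀ b, ∃ a, g b + f a ∈ R)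
    {m : F} (hm : m ∈ span R (Set.range f)) {x : F} (hx : x ∈ Set.range f ∪ Set.range g) :
    m * x ∈ span R (Set.range f) := by
  induction hm using span_induction with
  | mem y hy =>
    obtain ⟨a, rfl⟩ := hy
    rcases hx with ⟨a', rfl⟩ | ⟨b, rfl⟩
    · rw [← map_mul]
      exact subset_span (Set.mem_range_self _)
    · obtain ⟨b', hb'⟩ := hf a
      rw [show f a * g b = (f a + g b') * g b - 1 * g (b' * b) by rw [map_mul]; noncomm_ring]
      exact sub_mem (mul_apply_mem_span_range hg hb' b) (mul_apply_mem_span_range hg R.one_mem _)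
  | zero => simp
  | add y z _ _ hy hz => simpa [add_mul] using add_mem hy hz
  | smul r y _ hy => simpa [Subalgebra.smul_def, mul_assoc] using smul_mem _ r hy

theorem span_range_eq_top (hgen : Algebra.adjoin k (Set.range f ∪ Set.range g) = ⊤)
    (hf : ∀ a, ∃ b, f a + g b ∈ R) (hg : ∀ b, ∃ a, g b + f a ∈ R) :
    span R (Set.range f) = ⊤ := by
  refine eq_top_iff'.2 fun y => ?_
  have hy : ∀ m ∈ span R (Set.range f), m * y ∈ span R (Set.range f) := by
    have : y ∈ Algebra.adjoin k (Set.range f ∪ Set.range g) := hgen ▸ Algebra.mem_top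
    induction this using Algebra.adjoin_induction with
    | mem x hx => exact fun m hm => mul_mem_span_range hf hg hm hx
    | algebraMap c =>
      intro m hm
      rw [← Algebra.commutes]
      exact smul_mem _ (algebraMap k R c) hm
    | add x z _ _ hx hz => exact fun m hm => by simpa [mul_add] using add_mem (hx m hm) (hz m hm)
    | mul x z _ _ hx hz => exact fun m hm => by simpa [mul_assoc] using hz _ (hx m hm)
  simpa using hy 1 (subset_span ⟨1, map_one f⟩)

theorem forall_exists_add_mem_of_codisjoint {Abar : Submodule k A}
    (hAbar : Codisjoint (span k {(1 : A)}) Abar) (h : ∀ a ∈ Abar, ∃ b, f a + g b ∈ R) (a : A) :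
    ∃ b, f a + g b ∈ R := by
  obtain ⟨u, hu, w, hw, rfl⟩ := mem_sup.1 (hAbar.eq_top ▸ mem_top : a ∈ span k {1} ⊔ Abar)
  obtain ⟨c, rfl⟩ := mem_span_singleton.1 hu
  obtain ⟨b, hb⟩ := h w hw
  refine ⟨b, ?_⟩
  rw [map_add, map_smul, map_one, add_assoc]
  exact add_mem (R.smul_mem R.one_mem c) hb

theorem exists_sum_mul_eq_of_span_eq_top {ι : Type*} [Fintype ι] {x : ι → F}
    (hx : span R (Set.range x) = ⊤) (y : F) :
    ∃ c : ι → F, (∀ i, c i ∈ R) ∧ y = ∑ i, c i * x i := by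
  obtain ⟨c, rfl⟩ := (mem_span_range_iff_exists_fun R).1 (hx ▸ mem_top : y ∈ span R (Set.range x))
  exact ⟨fun i => c i, fun i => (c i).2, rfl⟩

end LeftGeneration

open Submodule in
theorem exists_fin_span_eq_top {k F A B : Type*} [Field k] [Ring F] [Algebra k F] [Ring A]
    [Algebra k A] [FiniteDimensional k A] [Semiring B] [Algebra k B] {R : Subalgebra k F}
    {f : A →ₐ[k] F} {g : B →ₐ[k] F}
    (hgen : Algebra.adjoin k (Set.range f ∪ Set.range g) = ⊤)
    (hf : ∀ a, ∃ b, f a + g b ∈ R) (hg : ∀ b, ∃ a, g b + f a ∈ R) :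
    ∃ x : Fin (Module.finrank k A) → F, span R (Set.range x) = ⊤ := by
  let e := Module.finBasis k A
  refine ⟨f ∘ e, eq_top_iff.2 ((span_range_eq_top hgen hf hg).ge.trans (span_le.2 ?_))⟩
  rintro _ ⟨a, rfl⟩
  apply span_le_restrictScalars k R
  rw [Set.range_comp]
  have := mem_map_of_mem (f := f.toLinearMap) (e.span_eq ▸ mem_top : a ∈ span k (Set.range e))
  rwa [← span_image] at this

theorem statement15_general (k : Type) [Field k]
    (A B : Type) [Ring A] [Ring B] [Algebra k A] [Algebra k B]
    [FiniteDimensional k A] [FiniteDimensional k B]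
    -- `Ā` and `B̄` are `k`-linear complements of `k·1` in `A` and in `B`
    (Abar : Submodule k A) (Bbar : Submodule k B)
    (hAbar : IsCompl (Submodule.span k {(1 : A)}) Abar)
    (hBbar : IsCompl (Submodule.span k {(1 : B)}) Bbar)
    -- `V` is a subspace of `Ā ⊕ B̄ ⊆ A*B` ...
    (V : Submodule k (FP k A B))
    -- ... such that the projections `π_A, π_B` restrict to surjections of `V` onto `Ā`, `B̄`
    (hsurjA : ∀ a ∈ Abar, ∃ b ∈ Bbar, inl k A B a + inr k A B b ∈ V)
    (hsurjB : ∀ b ∈ Bbar, ∃ a ∈ Abar, inl k A B a + inr k A B b ∈ V) :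
    -- then `A*B` is generated by `m = min (dim A) (dim B)` elements
    -- as a left module over the subalgebra `R(V)` generated by `V`
    ∃ x : Fin (min (Module.finrank k A) (Module.finrank k B)) → FP k A B,
      ∀ y : FP k A B,
        ∃ c : Fin (min (Module.finrank k A) (Module.finrank k B)) → FP k A B,
          (∀ i, c i ∈ Algebra.adjoin k (V : Set (FP k A B))) ∧ y = ∑ i, c i * x i := by
  set R := Algebra.adjoin k (V : Set (FP k A B))
  have hA : ∀ a, ∃ b, inl k A B a + inr k A B b ∈ R :=
    forall_exists_add_mem_of_codisjoint hAbar.codisjoint fun a ha =>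
      (hsurjA a ha).imp fun _ hb => Algebra.subset_adjoin hb.2
  have hB : ∀ b, ∃ a, inr k A B b + inl k A B a ∈ R :=
    forall_exists_add_mem_of_codisjoint hBbar.codisjoint fun b hb =>
      (hsurjB b hb).imp fun _ ha => add_comm (inl k A B _) _ ▸ Algebra.subset_adjoin ha.2
  have hgen := FP.adjoin_range_inl_union_range_inr k A B
  obtain h | h := min_choice (Module.finrank k A) (Module.finrank k B) <;> rw [h]
  · obtain ⟨x, hx⟩ := exists_fin_span_eq_top hgen hA hB
    exact ⟨x, exists_sum_mul_eq_of_span_eq_top hx⟩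
  · obtain ⟨x, hx⟩ := exists_fin_span_eq_top (Set.union_comm _ _ ▸ hgen) hB hA
    exact ⟨x, exists_sum_mul_eq_of_span_eq_top hx⟩

theorem statement15 (k : Type) [Field k] [IsAlgClosed k] [CharZero k]
    (A B : Type) [Ring A] [Ring B] [Algebra k A] [Algebra k B]
    [FiniteDimensional k A] [FiniteDimensional k B]
    -- `Ā` and `B̄` are `k`-linear complements of `k·1` in `A` and in `B`
    (Abar : Submodule k A) (Bbar : Submodule k B)
    (hAbar : IsCompl (Submodule.span k {(1 : A)}) Abar)
    (hBbar : IsCompl (Submodule.span k {(1 : B)}) Bbar)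
    -- `V` is a subspace of `Ā ⊕ B̄ ⊆ A*B` ...
    (V : Submodule k (FP k A B))
    (hV : ∀ v ∈ V, ∃ a ∈ Abar, ∃ b ∈ Bbar, v = inl k A B a + inr k A B b)
    -- ... such that the projections `π_A, π_B` restrict to surjections of `V` onto `Ā`, `B̄`
    (hsurjA : ∀ a ∈ Abar, ∃ b ∈ Bbar, inl k A B a + inr k A B b ∈ V)
    (hsurjB : ∀ b ∈ Bbar, ∃ a ∈ Abar, inl k A B a + inr k A B b ∈ V) :
    -- then `A*B` is generated by `m = min (dim A) (dim B)` elements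
    -- as a left module over the subalgebra `R(V)` generated by `V`
    ∃ x : Fin (min (Module.finrank k A) (Module.finrank k B)) → FP k A B,
      ∀ y : FP k A B,
        ∃ c : Fin (min (Module.finrank k A) (Module.finrank k B)) → FP k A B,
          (∀ i, c i ∈ Algebra.adjoin k (V : Set (FP k A B))) ∧ y = ∑ i, c i * x i :=
  statement15_general k A B Abar Bbar hAbar hBbar V hsurjA hsurjB
end

section
/- Let R be a unital associative k-algebra and R₁ ⊆ R a subalgebra such that there exists a surjective homomorphism of left R₁-modules R₁^⊕s → R for some natural number s. If every simple left R₁-module has k-dimension at most r, then every simple left R-module has k-dimension at most s·r. -/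
/-!
Pick `v ≠ 0` in the simple `R`-module `N`. Since `R = ∑ R₁ xᵢ`, the module `N = R v` is spanned
over `R₁` by the `s` vectors `xᵢ v`, so it is a finitely generated `R₁`-module and has a maximal
`R₁`-submodule `U`; the quotient `N ⧸ U` is a simple `R₁`-module, of dimension at most `r`.
The map `n ↦ (xᵢ n mod U)ᵢ` from `N` to `(N ⧸ U)ˢ` is injective: its kernel consists of the `n`
with `R n ⊆ U`, and for `n ≠ 0` that would force `U = N`.
-/

open Submodule

universe u v

section

variable {S R : Type*} {N : Type u} {ι : Type v} [Ring S] [Ring R] [AddCommGroup N] [Module R N]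
  [Module S R] [Module S N] [IsScalarTower S R N] {x : ι → R}

theorem span_range_smul_eq_top (hx : span S (Set.range x) = ⊤) {v : N} (hv : span R {v} = ⊤) :
    span S (Set.range fun i ↦ x i • v) = ⊤ := by
  have := congr_arg (map ((LinearMap.toSpanSingleton R N v).restrictScalars S)) hx
  rwa [map_span, ← Set.range_comp, Submodule.map_top, LinearMap.range_restrictScalars,
    LinearMap.range_toSpanSingleton, hv, restrictScalars_top] at this

theorem eq_zero_of_forall_smul_mem [IsSimpleModule R N] (hx : span S (Set.range x) = ⊤)
    {U : Submodule S N} (hU : U ≠ ⊤) {n : N} (hn : ∀ i, x i • n ∈ U) : n = 0 := by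
  by_contra hn0
  have hRn : ∀ y : R, y • n ∈ U := by
    have : span S (Set.range x) ≤ U.comap ((LinearMap.toSpanSingleton R N n).restrictScalars S) :=
      span_le.mpr (Set.range_subset_iff.mpr hn)
    exact fun y ↦ this (hx ▸ mem_top)
  refine hU (eq_top_iff.mpr fun m _ ↦ ?_)
  obtain ⟨y, rfl⟩ :=
    (span_singleton_eq_top_iff R n).mp (IsSimpleModule.span_singleton_eq_top R hn0) m
  exact hRn y

theorem IsSimpleModule.finite_of_span_range_eq_top [Finite ι] [IsSimpleModule R N]
    (hx : span S (Set.range x) = ⊤) : Module.Finite S N := by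
  have : Nontrivial N := IsSimpleModule.nontrivial R N
  obtain ⟨v, hv⟩ := exists_ne (0 : N)
  have hspan := span_range_smul_eq_top hx (IsSimpleModule.span_singleton_eq_top R hv)
  exact .of_fg_top (hspan ▸ fg_span (Set.finite_range _))

theorem rank_le_card_mul_rank_quotient {k : Type*} [DivisionRing k] [Module k N]
    [SMulCommClass R k N] [SMul k S] [IsScalarTower k S N] [Fintype ι] [IsSimpleModule R N]
    (hx : span S (Set.range x) = ⊤) {U : Submodule S N} (hU : U ≠ ⊤) :
    Module.rank k N ≤ Fintype.card ι * Module.rank k (N ⧸ U) := by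
  let φ : N →ₗ[k] ι → N ⧸ U :=
    LinearMap.pi fun i ↦ (U.mkQ.restrictScalars k).comp (DistribSMul.toLinearMap k N (x i))
  have hφ : Function.Injective φ := by
    refine (injective_iff_map_eq_zero φ).mpr fun n hn ↦ eq_zero_of_forall_smul_mem hx hU fun i ↦ ?_
    simpa [φ, Quotient.mk_eq_zero] using congr_fun hn i
  have := LinearMap.lift_rank_le_of_injective φ hφ
  rwa [rank_fun_eq_lift_mul, Cardinal.lift_mul, Cardinal.lift_natCast, Cardinal.lift_lift,
    Cardinal.lift_umax.{u, v}, ← Cardinal.lift_natCast.{v, u}, ← Cardinal.lift_mul,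
    Cardinal.lift_le] at this

end

theorem statement17_general (k : Type) [Field k]
    (R : Type) [Ring R] [Algebra k R] (R₁ : Subalgebra k R) (s r : ℕ)
    -- there is a surjection of left `R₁`-modules `R₁^⊕s → R`, i.e. `R` is generated
    -- by `s` elements as a left `R₁`-module
    (x : Fin s → R)
    (hx : ∀ y : R, ∃ a : Fin s → R, (∀ i, a i ∈ R₁) ∧ y = ∑ i, a i * x i)
    -- every simple left `R₁`-module has `k`-dimension at most `r`
    (h : ∀ (M : Type) [AddCommGroup M] [Module R₁ M] [Module k M] [IsScalarTower k R₁ M],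
      IsSimpleModule R₁ M → Module.rank k M ≤ (r : Cardinal)) :
    -- then every simple left `R`-module has `k`-dimension at most `s * r`
    ∀ (N : Type) [AddCommGroup N] [Module R N] [Module k N] [IsScalarTower k R N],
      IsSimpleModule R N → Module.rank k N ≤ ((s * r : ℕ) : Cardinal) := by
  intro N _ _ _ _ _
  have hspan : span R₁ (Set.range x) = ⊤ := by
    refine eq_top_iff.mpr fun y _ ↦ (mem_span_range_iff_exists_fun R₁).mpr ?_
    obtain ⟨a, ha, rfl⟩ := hx y
    exact ⟨fun i ↦ ⟨a i, ha i⟩, rfl⟩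
  have : Module.Finite R₁ N := IsSimpleModule.finite_of_span_range_eq_top hspan
  have : Nontrivial N := IsSimpleModule.nontrivial R N
  obtain ⟨U, hU⟩ := IsCoatomic.exists_coatom (α := Submodule R₁ N)
  calc Module.rank k N ≤ s * Module.rank k (N ⧸ U) := by
        simpa using rank_le_card_mul_rank_quotient (k := k) hspan hU.1
    _ ≤ s * r := mul_le_mul_right (h _ (isSimpleModule_iff_isCoatom.mpr hU)) _
    _ = ((s * r : ℕ) : Cardinal) := by norm_cast

theorem statement17 (k : Type) [Field k] [IsAlgClosed k] [CharZero k]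
    (R : Type) [Ring R] [Algebra k R] (R₁ : Subalgebra k R) (s r : ℕ)
    -- there is a surjection of left `R₁`-modules `R₁^⊕s → R`, i.e. `R` is generated
    -- by `s` elements as a left `R₁`-module
    (x : Fin s → R)
    (hx : ∀ y : R, ∃ a : Fin s → R, (∀ i, a i ∈ R₁) ∧ y = ∑ i, a i * x i)
    -- every simple left `R₁`-module has `k`-dimension at most `r`
    (h : ∀ (M : Type) [AddCommGroup M] [Module R₁ M] [Module k M] [IsScalarTower k R₁ M],
      IsSimpleModule R₁ M → Module.rank k M ≤ (r : Cardinal)) :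
    -- then every simple left `R`-module has `k`-dimension at most `s * r`
    ∀ (N : Type) [AddCommGroup N] [Module R N] [Module k N] [IsScalarTower k R N],
      IsSimpleModule R N → Module.rank k N ≤ ((s * r : ℕ) : Cardinal) :=
  statement17_general k R R₁ s r x hx h
end
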